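/- The pushforward of the measure ζ(dx) = 2dx/(x²−1) on {|x|>1} under the map x ↦ log((|x|+1)/2) is a measure on (0,∞) which is finite on [δ,∞) for every δ>0 and satisfies the integrability condition ∫ min(1,t) dν(t) < ∞; in particular it is the Lévy measure of a subordinator. -/

import Mathlib

/-!
Since `log s ≤ s - 1`, the image `t = log((|x|+1)/2)` of `x` is at most `(|x|-1)/2`, so
`min 1 t` is `O(|x| - 1)` near `|x| = 1`, which cancels the pole of `2/(x²-1)`, while for large
`|x|` the density itself is `O(1/x²)`. Hence `min 1 t · 2/(x²-1) ≤ 4/(1+x²)`, which is integrable,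
and the tail bound `ν [δ,∞) < ∞` follows from Markov's inequality for `min 1 t`.
-/

open MeasureTheory Set

theorem measure_Ici_lt_top_of_lintegral_min_one_lt_top {ν : Measure ℝ}
    (h : ∫⁻ t, ENNReal.ofReal (min 1 t) ∂ν < ⊤) {δ : ℝ} (hδ : 0 < δ) : ν (Ici δ) < ⊤ := by
  have hε : ENNReal.ofReal (min 1 δ) ≠ 0 := by
    rw [ENNReal.ofReal_ne_zero_iff]
    exact lt_min one_pos hδ
  have hIci : Ici δ ⊆ {t | ENNReal.ofReal (min 1 δ) ≤ ENNReal.ofReal (min 1 t)} :=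
    fun t ht => ENNReal.ofReal_le_ofReal (min_le_min le_rfl ht)
  calc ν (Ici δ)
      ≤ (∫⁻ t, ENNReal.ofReal (min 1 t) ∂ν) / ENNReal.ofReal (min 1 δ) :=
        (measure_mono hIci).trans
          (meas_ge_le_lintegral_div (by fun_prop) hε ENNReal.ofReal_ne_top)
    _ < ⊤ := ENNReal.div_lt_top h.ne hε

theorem two_div_sq_sub_one_mul_min_one_log_le {y : ℝ} (hy : 1 < y) :
    2 / (y ^ 2 - 1) * min 1 (Real.log ((y + 1) / 2)) ≤ 4 / (1 + y ^ 2) := by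
  have hsq : 0 < y ^ 2 - 1 := by nlinarith
  have hdensity : 0 ≤ 2 / (y ^ 2 - 1) := by positivity
  rcases le_total y 3 with hy3 | hy3
  · have hlog : Real.log ((y + 1) / 2) ≤ (y - 1) / 2 := by
      linarith [Real.log_le_sub_one_of_pos (show 0 < (y + 1) / 2 by linarith)]
    calc 2 / (y ^ 2 - 1) * min 1 (Real.log ((y + 1) / 2))
        ≤ 2 / (y ^ 2 - 1) * ((y - 1) / 2) :=
          mul_le_mul_of_nonneg_left ((min_le_right _ _).trans hlog) hdensity
      _ = 1 / (y + 1) := by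
          field_simp
          ring
      _ ≤ 4 / (1 + y ^ 2) := by
          rw [div_le_div_iff₀ (by linarith) (by positivity)]
          nlinarith
  · calc 2 / (y ^ 2 - 1) * min 1 (Real.log ((y + 1) / 2))
        ≤ 2 / (y ^ 2 - 1) * 1 := mul_le_mul_of_nonneg_left (min_le_left _ _) hdensity
      _ ≤ 4 / (1 + y ^ 2) := by
          rw [mul_one, div_le_div_iff₀ hsq (by positivity)]
          nlinarith

theorem setLIntegral_two_div_sq_sub_one_mul_min_one_log_lt_top :
    ∫⁻ x in {x : ℝ | 1 < |x|},
      ENNReal.ofReal (2 / (x ^ 2 - 1)) * ENNReal.ofReal (min 1 (Real.log ((|x| + 1) / 2))) < ⊤ := by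
  have hbound : ∀ x ∈ {x : ℝ | 1 < |x|},
      ENNReal.ofReal (2 / (x ^ 2 - 1)) * ENNReal.ofReal (min 1 (Real.log ((|x| + 1) / 2)))
        ≤ ENNReal.ofReal (4 * (1 + x ^ 2)⁻¹) := by
    intro x (hx : 1 < |x|)
    have hsq : 0 < |x| ^ 2 - 1 := by nlinarith
    rw [← sq_abs x, ← ENNReal.ofReal_mul (div_nonneg zero_le_two hsq.le), ← div_eq_mul_inv]
    exact ENNReal.ofReal_le_ofReal (two_div_sq_sub_one_mul_min_one_log_le hx)
  calc _ ≤ ∫⁻ x in {x : ℝ | 1 < |x|}, ENNReal.ofReal (4 * (1 + x ^ 2)⁻¹) :=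
        setLIntegral_mono (by fun_prop) hbound
    _ ≤ ∫⁻ x, ENNReal.ofReal (4 * (1 + x ^ 2)⁻¹) := setLIntegral_le_lintegral _ _
    _ < ⊤ := (integrable_inv_one_add_sq.const_mul 4).lintegral_lt_top

/-- The pushforward `ν` of `ζ(dx) = 2dx/(x²−1)` on `{|x|>1}` under
`x ↦ log((|x|+1)/2)` is a measure on `(0,∞)` that is finite on `[δ,∞)` for every
`δ > 0` and satisfies `∫ min(1,t) dν(t) < ∞`; i.e. it is the Lévy measure of a
subordinator. -/
theorem pushforward_zeta_is_levy_measure :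
    (∀ δ : ℝ, 0 < δ →
      (Measure.map (fun x : ℝ => Real.log ((|x| + 1) / 2))
        (((volume : Measure ℝ).restrict {x : ℝ | 1 < |x|}).withDensity
          (fun x => ENNReal.ofReal (2 / (x ^ 2 - 1))))) (Ici δ) < ⊤) ∧
    (∫⁻ t, ENNReal.ofReal (min 1 t)
        ∂(Measure.map (fun x : ℝ => Real.log ((|x| + 1) / 2))
          (((volume : Measure ℝ).restrict {x : ℝ | 1 < |x|}).withDensity
            (fun x => ENNReal.ofReal (2 / (x ^ 2 - 1)))))) < ⊤ := by
  have hmin : ∫⁻ t, ENNReal.ofReal (min 1 t)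
      ∂(Measure.map (fun x : ℝ => Real.log ((|x| + 1) / 2))
        (((volume : Measure ℝ).restrict {x : ℝ | 1 < |x|}).withDensity
          (fun x => ENNReal.ofReal (2 / (x ^ 2 - 1))))) < ⊤ := by
    rw [lintegral_map (by fun_prop) (by fun_prop),
      lintegral_withDensity_eq_lintegral_mul _ (by fun_prop) (by fun_prop)]
    exact setLIntegral_two_div_sq_sub_one_mul_min_one_log_lt_top
  exact ⟨fun δ hδ => measure_Ici_lt_top_of_lintegral_min_one_lt_top hmin hδ, hmin⟩
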